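/- arXiv:0809.1075 — 6 statements merged into one kernel-verified Lean document; each statement's English description precedes it below -/
import Mathlib

section
/- Let p : G̃ → G be a surjective group homomorphism whose kernel is {1, ε}, where ε ≠ 1 is a central element of G̃ with ε² = 1. Suppose g̃ ∈ G̃ commutes with every x̃ ∈ G̃ such that p(x̃) commutes with p(g̃) (that is, g̃ lies in the center of the subgroup p⁻¹(C_G(p(g̃)))). Then g̃ is not conjugate in G̃ to ε·g̃; equivalently, the conjugacy classes of g̃ and ε·g̃ are distinct. -/
/-- A relevant element of a two-fold cover (one commuting with the full
preimage of the centralizer of its image) is not conjugate to its `ε`-translate. -/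
theorem stmt_8 {Gt G : Type*} [Group Gt] [Group G] (p : Gt →* G)
    (hp : Function.Surjective p) (ε : Gt) (hεc : ε ∈ Subgroup.center Gt)
    (hε1 : ε ≠ 1) (hε2 : ε ^ 2 = 1)
    (hker : ∀ x : Gt, p x = 1 ↔ x = 1 ∨ x = ε)
    (g : Gt)
    (hrel : ∀ x : Gt, p x * p g = p g * p x → x * g = g * x) :
    ¬ IsConj g (ε * g) := by
  rintro ⟨c, hc⟩
  have hpε : p ε = 1 := (hker ε).mpr (Or.inr rfl)
  have hcg : c * g = ε * g * c := hc
  have hpcomm : p c * p g = p g * p c := by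
    have := congrArg p hcg
    simp only [map_mul, hpε, one_mul] at this
    exact this
  have hcomm := hrel c hpcomm
  have : g * c = ε * g * c := hcomm ▸ hcg
  have hε : ε = 1 := by
    have h2 := mul_right_cancel this.symm
    simpa using mul_right_cancel (h2.trans (one_mul g).symm)
  exact hε1 hε
end

section
/- Let G̃ be an abelian group and p : G̃ → G a surjective homomorphism whose kernel is {1, ε}, where ε ≠ 1 and ε² = 1. Let C be a subgroup of G with c² = 1 for all c ∈ C, let Ḡ = G/C, and let φ : Ḡ → G be the homomorphism sending the coset hC to h² (well defined since C has exponent 2). Let S̃ = p⁻¹(φ(Ḡ)). Suppose χ̃ : G̃ → ℂˣ is a homomorphism with χ̃(ε) = -1 and χ, ψ : Ḡ → ℂˣ are homomorphisms such that ψ(t) = χ(t) for every t ∈ Ḡ with φ(t) = 1. Then there is a unique homomorphism ψ̃₀ : S̃ → ℂˣ such that ψ̃₀(g̃) = χ̃(g̃)·ψ(h)·χ(h)⁻¹ for every g̃ ∈ S̃ and every h ∈ Ḡ with φ(h) = p(g̃); moreover ψ̃₀(ε) = -1. -/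
/-- Lifting for tori: given lifting data `(χ̃, χ)` and a character `ψ`
of `Ḡ = G/C` agreeing with `χ` on the kernel of the squaring map `φ`, there is a
unique character `ψ̃₀` of `S̃ = p⁻¹(φ(Ḡ))` with
`ψ̃₀(g̃) = χ̃(g̃) ψ(h) χ(h)⁻¹` whenever `φ(h) = p(g̃)`; moreover `ψ̃₀(ε) = -1`. -/
theorem stmt_10 {Gt G : Type*} [CommGroup Gt] [CommGroup G] (p : Gt →* G)
    (hp : Function.Surjective p) (ε : Gt) (hε1 : ε ≠ 1) (hε2 : ε ^ 2 = 1)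
    (hker : ∀ x : Gt, p x = 1 ↔ x = 1 ∨ x = ε)
    (C : Subgroup G) (hC2 : ∀ c ∈ C, c ^ 2 = 1)
    (φ : G ⧸ C →* G) (hφ : ∀ h : G, φ (QuotientGroup.mk h) = h ^ 2)
    (χt : Gt →* ℂˣ) (hχt : χt ε = -1)
    (χ ψ : G ⧸ C →* ℂˣ)
    (hψχ : ∀ t : G ⧸ C, φ t = 1 → ψ t = χ t) :
    (∃! ψ0 : ↥(φ.range.comap p) →* ℂˣ,
      ∀ (g : ↥(φ.range.comap p)) (h : G ⧸ C), φ h = p (g : Gt) →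
        ψ0 g = χt (g : Gt) * ψ h * (χ h)⁻¹) ∧
    (∀ ψ0 : ↥(φ.range.comap p) →* ℂˣ,
      (∀ (g : ↥(φ.range.comap p)) (h : G ⧸ C), φ h = p (g : Gt) →
        ψ0 g = χt (g : Gt) * ψ h * (χ h)⁻¹) →
      ∀ hmem : ε ∈ φ.range.comap p, ψ0 ⟨ε, hmem⟩ = -1) := by
  classical
  have key : ∀ g : ↥(φ.range.comap p), ∃ h : G ⧸ C, φ h = p (g : Gt) := fun g => g.2
  set F : ↥(φ.range.comap p) → ℂˣ := fun g =>
    χt (g : Gt) * ψ (Classical.choose (key g)) * (χ (Classical.choose (key g)))⁻¹ with hF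
  have hFany : ∀ (g : ↥(φ.range.comap p)) (h : G ⧸ C), φ h = p (g : Gt) →
      F g = χt (g : Gt) * ψ h * (χ h)⁻¹ := by
    intro g h hh
    have h0 := Classical.choose_spec (key g)
    set h₀ := Classical.choose (key g) with hh₀
    have hk : φ (h₀ * h⁻¹) = 1 := by
      rw [map_mul, map_inv, h0, hh, mul_inv_cancel]
    have hψ := hψχ _ hk
    rw [map_mul, map_inv, map_mul, map_inv] at hψ
    simp only [hF]
    have heq : ψ h₀ * (χ h₀)⁻¹ = ψ h * (χ h)⁻¹ := by
      rw [← div_eq_mul_inv, ← div_eq_mul_inv] at hψ ⊢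
      rw [div_eq_div_iff_mul_eq_mul] at hψ ⊢
      rw [hψ, mul_comm]
    rw [mul_assoc, mul_assoc, heq]
  have hmul : ∀ g g' : ↥(φ.range.comap p), F (g * g') = F g * F g' := by
    intro g g'
    obtain ⟨h, hh⟩ := key g
    obtain ⟨h', hh'⟩ := key g'
    have : φ (h * h') = p ((g * g' : ↥(φ.range.comap p)) : Gt) := by
      push_cast
      rw [map_mul, map_mul, hh, hh']
    rw [hFany _ _ this, hFany _ _ hh, hFany _ _ hh']
    push_cast
    rw [map_mul, map_mul, map_mul, mul_inv]
    exact Units.ext (by push_cast; ring)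
  have hone : F 1 = 1 := by
    have h1 : φ (1 : G ⧸ C) = p ((1 : ↥(φ.range.comap p)) : Gt) := by
      rw [OneMemClass.coe_one, map_one, map_one]
    rw [hFany _ _ h1]
    simp
  let Fhom : ↥(φ.range.comap p) →* ℂˣ := ⟨⟨F, hone⟩, hmul⟩
  have hεmem : ε ∈ φ.range.comap p := by
    have hpε : p ε = 1 := (hker ε).mpr (Or.inr rfl)
    rw [Subgroup.mem_comap, hpε]
    exact ⟨1, map_one φ⟩
  have hεval : ∀ ψ0 : ↥(φ.range.comap p) →* ℂˣ,
      (∀ (g : ↥(φ.range.comap p)) (h : G ⧸ C), φ h = p (g : Gt) →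
        ψ0 g = χt (g : Gt) * ψ h * (χ h)⁻¹) →
      ∀ hmem : ε ∈ φ.range.comap p, ψ0 ⟨ε, hmem⟩ = -1 := by
    intro ψ0 hspec hmem
    have hpε : p ε = 1 := (hker ε).mpr (Or.inr rfl)
    have h1 : φ (1 : G ⧸ C) = p ((⟨ε, hmem⟩ : ↥(φ.range.comap p)) : Gt) := by
      simp [hpε]
    rw [hspec _ _ h1]
    simp [hχt]
  refine ⟨⟨Fhom, fun g h hh => hFany g h hh, ?_⟩, hεval⟩
  intro ψ0 hspec
  apply MonoidHom.ext
  intro g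
  obtain ⟨h, hh⟩ := key g
  rw [hspec _ _ hh]
  exact (hFany g h hh).symm
end

section
/- Let G̃ be an abelian group and p : G̃ → G a surjective homomorphism whose kernel is {1, ε}, where ε ≠ 1 and ε² = 1. Assume every element of G is the square of an element of G. Let χ̃ : G̃ → ℂˣ be a homomorphism with χ̃(ε) = -1, and let ψ : G → ℂˣ be a homomorphism. Then the following are equivalent: (a) there exists a homomorphism ψ̃ : G̃ → ℂˣ with ψ̃(ε) = -1 such that ψ̃(g̃)² = ψ(p(g̃)) for all g̃ ∈ G̃; (b) for every t̃ ∈ G̃ with p(t̃)² = 1 one has ψ(p(t̃)) = χ̃(t̃²). (Note that p(t̃)² = 1 forces t̃² ∈ {1, ε}, so condition (b) does not depend on the choice of χ̃.) -/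
/-!
Genuine characters of `G̃` agree on `ker p = {1, ε}`, which gives (a) ⇒ (b) since
`ψ (p t) = ψ̃ (t²)` and `t² ∈ ker p`. Conversely, `χ̃²` is trivial on `ker p`, so it descends
to a character `χ₂` of `G`, and (b) says exactly that `θ = ψ / χ₂` kills the `2`-torsion of `G`.
As squaring is onto `G` with kernel the `2`-torsion, `θ` factors through it: `θ = σ²` for a
character `σ` of `G`, and `ψ̃ = χ̃ · (σ ∘ p)` is a genuine square root of `ψ ∘ p`.
-/

namespace MonoidHom

theorem exists_apply_eq_of_ker_le {A B C : Type*} [Group A] [Group B] [Group C] {f : A →* B}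
    (hf : Function.Surjective f) (g : A →* C) (hg : f.ker ≤ g.ker) : ∃ φ : B →* C, ∀ x, φ (f x) = g x :=
  ⟨f.liftOfSurjective hf ⟨g, hg⟩, f.liftOfRightInverse_comp_apply _ _ _⟩

theorem exists_sq_eq_of_map_eq_one {A C : Type*} [CommGroup A] [Group C] {θ : A →* C}
    (hsq : ∀ a : A, ∃ b, b ^ 2 = a) (hθ : ∀ a : A, a ^ 2 = 1 → θ a = 1) :
    ∃ σ : A →* C, ∀ a, σ a ^ 2 = θ a := by
  have hsurj : Function.Surjective (powMonoidHom 2 : A →* A) := hsq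
  obtain ⟨σ, hσ⟩ := exists_apply_eq_of_ker_le hsurj θ hθ
  exact ⟨σ, fun a => by rw [← map_pow, ← hσ a, powMonoidHom_apply]⟩

end MonoidHom

section TwoFoldCover

variable {Gt G : Type*} [CommGroup Gt] [CommGroup G] {p : Gt →* G} {ε : Gt}

theorem apply_eq_of_map_eq_one {M : Type*} [Monoid M] (hker : ∀ x, p x = 1 → x = 1 ∨ x = ε)
    {f g : Gt →* M} (hfg : f ε = g ε) {x : Gt} (hx : p x = 1) : f x = g x := by
  rcases hker x hx with rfl | rfl
  · rw [map_one, map_one]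
  · exact hfg

theorem exists_apply_eq_sq {C : Type*} [CommGroup C] (hp : Function.Surjective p)
    (hker : ∀ x, p x = 1 → x = 1 ∨ x = ε) (χ : Gt →* C) (hχ : χ ε ^ 2 = 1) :
    ∃ χ₂ : G →* C, ∀ x, χ₂ (p x) = χ x ^ 2 :=
  MonoidHom.exists_apply_eq_of_ker_le hp ((powMonoidHom 2).comp χ) fun _ hx =>
    apply_eq_of_map_eq_one hker (f := (powMonoidHom 2).comp χ) (g := 1) hχ hx

end TwoFoldCover

theorem stmt_11_general {Gt G : Type*} [CommGroup Gt] [CommGroup G] (p : Gt →* G)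
    (hp : Function.Surjective p) (ε : Gt)
    (hker : ∀ x : Gt, p x = 1 ↔ x = 1 ∨ x = ε)
    (hsq : ∀ g : G, ∃ h : G, h ^ 2 = g)
    (χt : Gt →* ℂˣ) (hχt : χt ε = -1)
    (ψ : G →* ℂˣ) :
    (∃ ψt : Gt →* ℂˣ, ψt ε = -1 ∧ ∀ g : Gt, (ψt g) ^ 2 = ψ (p g)) ↔
    (∀ t : Gt, (p t) ^ 2 = 1 → ψ (p t) = χt (t ^ 2)) := by
  have hker' x := (hker x).1
  constructor
  · rintro ⟨ψt, hψt, hψt_sq⟩ t ht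
    rw [← hψt_sq, ← map_pow,
      apply_eq_of_map_eq_one hker' (hψt.trans hχt.symm) (by rwa [map_pow])]
  · intro hb
    obtain ⟨χ₂, hχ₂⟩ := exists_apply_eq_sq hp hker' χt (by rw [hχt]; norm_num)
    obtain ⟨σ, hσ⟩ := MonoidHom.exists_sq_eq_of_map_eq_one (θ := ψ / χ₂) hsq fun g hg => by
      obtain ⟨t, rfl⟩ := hp g
      rw [MonoidHom.div_apply, hb t hg, map_pow, ← hχ₂, div_self']
    refine ⟨χt * σ.comp p, by simp [hχt, (hker ε).2 (Or.inr rfl)], fun g => ?_⟩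
    rw [MonoidHom.mul_apply, mul_pow, MonoidHom.comp_apply, hσ, ← hχ₂, MonoidHom.div_apply,
      mul_div_cancel]

/-- For a two-fold cover of an abelian group in which every element of
`G` is a square, a character `ψ` of `G` has a genuine square root on `G̃` if and only
if `ψ(p t̃) = χ̃(t̃²)` for every `t̃` with `p(t̃)² = 1`. -/
theorem stmt_11 {Gt G : Type*} [CommGroup Gt] [CommGroup G] (p : Gt →* G)
    (hp : Function.Surjective p) (ε : Gt) (hε1 : ε ≠ 1) (hε2 : ε ^ 2 = 1)
    (hker : ∀ x : Gt, p x = 1 ↔ x = 1 ∨ x = ε)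
    (hsq : ∀ g : G, ∃ h : G, h ^ 2 = g)
    (χt : Gt →* ℂˣ) (hχt : χt ε = -1)
    (ψ : G →* ℂˣ) :
    (∃ ψt : Gt →* ℂˣ, ψt ε = -1 ∧ ∀ g : Gt, (ψt g) ^ 2 = ψ (p g)) ↔
    (∀ t : Gt, (p t) ^ 2 = 1 → ψ (p t) = χt (t ^ 2)) :=
  stmt_11_general p hp ε hker hsq χt hχt ψ
end

section
/- Let G̃ be an abelian group and p : G̃ → G a surjective homomorphism whose kernel is {1, ε}, where ε ≠ 1 and ε² = 1. Let C be a subgroup of G with c² = 1 for all c ∈ C, let Ḡ = G/C, let φ : Ḡ → G be the homomorphism sending hC to h², and let S̃ = p⁻¹(φ(Ḡ)). Let χ̃, ψ̃ : G̃ → ℂˣ be homomorphisms with χ̃(ε) = ψ̃(ε) = -1, and let χ : Ḡ → ℂˣ be a homomorphism. Then: (i) there is a unique homomorphism δ : G → ℂˣ with δ ∘ p = ψ̃·χ̃⁻¹; (ii) the homomorphism ψ : Ḡ → ℂˣ defined by ψ(h) = χ(h)·δ(φ(h)) satisfies ψ(t) = χ(t) for every t ∈ Ḡ with φ(t) = 1;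 (iii) the resulting homomorphism ψ̃₀ : S̃ → ℂˣ determined by ψ̃₀(g̃) = χ̃(g̃)·ψ(h)·χ(h)⁻¹ (for any h ∈ Ḡ with φ(h) = p(g̃)) coincides with the restriction of ψ̃ to S̃. -/
/-- Given lifting data `(χ̃, χ)` and a genuine character `ψ̃` of `G̃`:
(i) `ψ̃ χ̃⁻¹` descends uniquely to a character `δ` of `G`;
(ii) `ψ(h) = χ(h) δ(φ(h))` agrees with `χ` on the kernel of `φ`;
(iii) the character `ψ̃₀` of `S̃` determined by `ψ̃₀(g̃) = χ̃(g̃) ψ(h) χ(h)⁻¹`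
coincides with the restriction of `ψ̃` to `S̃`. -/
theorem stmt_12 {Gt G : Type*} [CommGroup Gt] [CommGroup G] (p : Gt →* G)
    (hp : Function.Surjective p) (ε : Gt) (hε1 : ε ≠ 1) (hε2 : ε ^ 2 = 1)
    (hker : ∀ x : Gt, p x = 1 ↔ x = 1 ∨ x = ε)
    (C : Subgroup G) (hC2 : ∀ c ∈ C, c ^ 2 = 1)
    (φ : G ⧸ C →* G) (hφ : ∀ h : G, φ (QuotientGroup.mk h) = h ^ 2)
    (χt ψt : Gt →* ℂˣ) (hχt : χt ε = -1) (hψt : ψt ε = -1)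
    (χ : G ⧸ C →* ℂˣ) :
    (∃! δ : G →* ℂˣ, ∀ x : Gt, δ (p x) = ψt x * (χt x)⁻¹) ∧
    (∀ δ : G →* ℂˣ, (∀ x : Gt, δ (p x) = ψt x * (χt x)⁻¹) →
      ((∀ t : G ⧸ C, φ t = 1 → χ t * δ (φ t) = χ t) ∧
       (∀ ψ0 : ↥(φ.range.comap p) →* ℂˣ,
         (∀ (g : ↥(φ.range.comap p)) (h : G ⧸ C), φ h = p (g : Gt) →
           ψ0 g = χt (g : Gt) * (χ h * δ (φ h)) * (χ h)⁻¹) →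
         ∀ g : ↥(φ.range.comap p), ψ0 g = ψt (g : Gt)))) := by
  set f : Gt → ℂˣ := fun x => ψt x * (χt x)⁻¹ with hf
  have hfε : f ε = 1 := by simp [hf, hχt, hψt]
  have hfmul : ∀ x y : Gt, f (x * y) = f x * f y := by
    intro x y
    simp only [hf, map_mul, mul_inv]
    exact (mul_mul_mul_comm _ _ _ _).symm
  have hconst : ∀ x y : Gt, p x = p y → f x = f y := by
    intro x y hxy
    have h1 : p (x * y⁻¹) = 1 := by rw [map_mul, map_inv, hxy]; simp
    rcases (hker _).1 h1 with h | h
    · have : x = y := by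
        have := mul_inv_eq_one.mp h; exact this
      rw [this]
    · have hx : x = ε * y := by
        have : x * y⁻¹ = ε := h
        rw [← this]; group
      rw [hx, hfmul, hfε, one_mul]
  choose s hs using hp
  refine ⟨?_, ?_⟩
  · refine ⟨MonoidHom.mk' (fun g => f (s g)) (fun a b => by
      show f (s (a * b)) = f (s a) * f (s b)
      have h1 : f (s (a * b)) = f (s a * s b) :=
        hconst _ _ (by rw [hs, map_mul, hs, hs])
      rw [h1, hfmul]), ?_, ?_⟩
    · intro x
      exact hconst _ _ (hs (p x))
    · intro δ' hδ'
      ext g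
      have := hδ' (s g)
      rw [hs] at this
      exact congrArg Units.val this
  · intro δ hδ
    refine ⟨?_, ?_⟩
    · intro t ht
      rw [ht, map_one, mul_one]
    · intro ψ0 hψ0 g
      obtain ⟨h, hh⟩ := g.2
      rw [hψ0 g h hh, hh, hδ]
      have hc := (χ h).ne_zero
      ext
      push_cast
      field_simp
end

section
/- Let N be a group and τ an automorphism of N with τ ∘ τ = id. Assume τ is not an inner automorphism of N, i.e., there is no g ∈ N with τ(n) = g·n·g⁻¹ for all n ∈ N. Form the semidirect product G = N ⋊ ℤ/2ℤ in which the nontrivial element of ℤ/2ℤ acts on N by τ. Then the centralizer in G of the canonical copy of N equals the canonical copy of the center Z(N) of N. -/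
/-- If `τ` is a non-inner involutive automorphism of `N`, then in the
semidirect product `N ⋊ ℤ/2ℤ` (with the nontrivial element acting by `τ`) the
centralizer of the canonical copy of `N` is the canonical copy of the center of `N`. -/
theorem stmt_15 {N : Type*} [Group N] (τ : MulAut N)
    (hτ2 : ∀ n : N, τ (τ n) = n)
    (hninner : ¬ ∃ g : N, ∀ n : N, τ n = g * n * g⁻¹)
    (φ : Multiplicative (ZMod 2) →* MulAut N)
    (hφ : φ (Multiplicative.ofAdd (1 : ZMod 2)) = τ) :
    Subgroup.centralizer
        (Set.range (SemidirectProduct.inl : N →* N ⋊[φ] Multiplicative (ZMod 2))) =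
      Subgroup.map (SemidirectProduct.inl : N →* N ⋊[φ] Multiplicative (ZMod 2))
        (Subgroup.center N) := by
  ext x
  simp only [Subgroup.mem_centralizer_iff, Set.mem_range, Subgroup.mem_map]
  constructor
  · intro h
    have key : ∀ m : N, m * x.left = x.left * φ x.right m := by
      intro m
      have := h (SemidirectProduct.inl m) ⟨m, rfl⟩
      have hl := congrArg SemidirectProduct.left this
      simpa using hl
    have hall : ∀ t : Multiplicative (ZMod 2), t = 1 ∨ t = Multiplicative.ofAdd 1 := by
      decide
    have hcases := hall x.right
    rcases hcases with h1 | h1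
    · refine ⟨x.left, ?_, ?_⟩
      · rw [Subgroup.mem_center_iff]
        intro m
        have := key m
        rw [h1] at this
        simpa using this
      · ext <;> simp [h1]
    · exfalso
      apply hninner
      refine ⟨x.left⁻¹, fun n => ?_⟩
      have := key n
      rw [h1, hφ] at this
      rw [inv_inv, mul_assoc, eq_inv_mul_iff_mul_eq]
      exact this.symm
  · rintro ⟨n, hn, rfl⟩
    rintro g ⟨m, rfl⟩
    rw [← map_mul, ← map_mul, (Subgroup.mem_center_iff.mp hn) m]
end

section
/- Let G be a group, N a normal subgroup of G, and x ∈ G with x² = 1. Let Θ : G → ℂ be a function such that Θ(n·g·n⁻¹) = Θ(g) for all n ∈ N and g ∈ G, and such that Θ(g) = 0 for every g not lying in the coset xN. Then for every z in the center of N and every g ∈ G, Θ(g·(x z x⁻¹ z⁻¹)) = Θ(g). -/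
/-- An `N`-conjugation invariant function supported on the coset `xN`
(with `x² = 1`, `N` normal) is invariant under right translation by the commutators
`x z x⁻¹ z⁻¹` for `z` in the center of `N`. -/
theorem stmt_16 {G : Type*} [Group G] (N : Subgroup G) [N.Normal]
    (x : G) (hx : x ^ 2 = 1) (Θ : G → ℂ)
    (hinv : ∀ n ∈ N, ∀ g : G, Θ (n * g * n⁻¹) = Θ g)
    (hsupp : ∀ g : G, (¬ ∃ n ∈ N, g = x * n) → Θ g = 0) :
    ∀ z : G, z ∈ N → (∀ n ∈ N, z * n = n * z) →
      ∀ g : G, Θ (g * (x * z * x⁻¹ * z⁻¹)) = Θ g := by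
  intro z hz hzc g
  have hN : N.Normal := inferInstance
  have hx1 : x * x = 1 := by rw [← sq]; exact hx
  have hcN : x * z * x⁻¹ * z⁻¹ ∈ N := mul_mem (hN.conj_mem z hz x) (inv_mem hz)
  by_cases h : ∃ n ∈ N, g = x * n
  · obtain ⟨n, hn, rfl⟩ := h
    have hn' : x⁻¹ * n * x ∈ N := by
      have := hN.conj_mem n hn x⁻¹
      simpa using this
    have hcomm : x * z * x⁻¹ * n = n * (x * z * x⁻¹) := by
      have h2 := hzc _ hn'
      calc x * z * x⁻¹ * n = x * (z * (x⁻¹ * n * x)) * x⁻¹ := by group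
        _ = x * ((x⁻¹ * n * x) * z) * x⁻¹ := by rw [h2]
        _ = n * (x * z * x⁻¹) := by group
    have key : x * n * (x * z * x⁻¹ * z⁻¹) = z * (x * n) * z⁻¹ := by
      have hxinv : x⁻¹ = x := inv_eq_of_mul_eq_one_right hx1
      rw [hxinv] at hcomm ⊢
      calc x * n * (x * z * x * z⁻¹) = x * (n * (x * z * x)) * z⁻¹ := by group
        _ = x * ((x * z * x) * n) * z⁻¹ := by rw [hcomm]
        _ = (x * x) * (z * (x * n)) * z⁻¹ := by group
        _ = z * (x * n) * z⁻¹ := by rw [hx1, one_mul]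
    rw [key, hinv z hz]
  · rw [hsupp g h, hsupp]
    intro ⟨n, hn, hgn⟩
    apply h
    refine ⟨n * (x * z * x⁻¹ * z⁻¹)⁻¹, mul_mem hn (inv_mem hcN), ?_⟩
    have : g = x * n * (x * z * x⁻¹ * z⁻¹)⁻¹ := by
      rw [← hgn]; group
    rw [this]; group
end
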